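/- arXiv:2510.10557 — 4 statements merged into one kernel-verified Lean document; each statement's English description precedes it below -/
import Mathlib

section
/- For all α ∈ [0,1], c > 0, and nonnegative reals x₁, x₂, the function H_{c,α} is subadditive: H_{c,α}(x₁ + x₂) ≤ H_{c,α}(x₁) + H_{c,α}(x₂). -/
/-!
Writing `u = x / c`, we have `H_{c,α}(x) = ⌊u⌋ + φ(fract u)` with `φ = fracTerm α`, i.e.
`φ(s) = s ^ α` and `φ(0) = 0`;
shifting `u` by an integer shifts `H` by the same integer, so it suffices to compare
`H(a + b)` with `φ(a) + φ(b)` for `a, b ∈ [0, 1)`. The function `φ` is concave on `[0, ∞)`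
(also for `α = 0`, where it is the indicator of `(0, ∞)`), and in both cases `H(a + b)` is a sum
`φ(x) + φ(y)` with `x ≤ a, b ≤ y` and `x + y = a + b`: `(x, y) = (0, a + b)` without carry and
`(x, y) = (a + b - 1, 1)` with a carry. Concavity gives `φ(x) + φ(y) ≤ φ(a) + φ(b)`.
-/

/-- `H_{c,α}` with the convention `0^0 = 0`, i.e. the fractional-part term
vanishes when the fractional part is `0`, so that `H_{c,α}(0) = 0` for all `α`. -/
noncomputable def Hz (c α x : ℝ) : ℝ :=
  (⌊x / c⌋ : ℝ) + (if Int.fract (x / c) = 0 then 0 else Int.fract (x / c) ^ α)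

open Set

theorem ConcaveOn.add_le_add_of_add_eq {s : Set ℝ} {f : ℝ → ℝ} (hf : ConcaveOn ℝ s f)
    {x y a b : ℝ} (hx : x ∈ s) (hy : y ∈ s) (hxa : x ≤ a) (hay : a ≤ y) (hab : a + b = x + y) :
    f x + f y ≤ f a + f b := by
  rcases (hxa.trans hay).eq_or_lt with rfl | hxy
  · obtain rfl : a = x := le_antisymm hay hxa
    obtain rfl : b = a := by linarith
    rfl
  set θ := (y - a) / (y - x)
  have hθ0 : 0 ≤ θ := div_nonneg (by linarith) (by linarith)
  have hθ1 : 0 ≤ 1 - θ := by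
    rw [sub_nonneg]; exact div_le_one_of_le₀ (by linarith) (by linarith)
  have ha : θ • x + (1 - θ) • y = a := by
    simp only [θ, smul_eq_mul]; field_simp; ring
  have hb : (1 - θ) • x + θ • y = b := by
    obtain rfl : b = x + y - a := by linarith
    simp only [θ, smul_eq_mul]; field_simp; ring
  have hfa := hf.2 hx hy hθ0 hθ1 (by ring)
  have hfb := hf.2 hx hy hθ1 hθ0 (by ring)
  rw [ha] at hfa
  rw [hb] at hfb
  simp only [smul_eq_mul] at hfa hfb
  linarith

noncomputable def fracTerm (α s : ℝ) : ℝ :=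
  if s = 0 then 0 else s ^ α

section fracTerm

variable {α : ℝ}

@[simp]
theorem fracTerm_zero : fracTerm α 0 = 0 := if_pos rfl

@[simp]
theorem fracTerm_one : fracTerm α 1 = 1 := by
  simp [fracTerm]

theorem concaveOn_fracTerm (h0 : 0 ≤ α) (h1 : α ≤ 1) : ConcaveOn ℝ (Ici 0) (fracTerm α) := by
  rcases h0.eq_or_lt with rfl | hpos
  · refine ⟨convex_Ici 0, fun x hx y hy a b ha hb hab => ?_⟩
    simp only [mem_Ici] at hx hy
    simp only [fracTerm, Real.rpow_zero, smul_eq_mul]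
    by_cases hxy : a * x + b * y = 0
    · have hax : a * x = 0 := by linarith [mul_nonneg ha hx, mul_nonneg hb hy]
      have hby : b * y = 0 := by linarith
      rw [if_pos hxy]
      rcases mul_eq_zero.1 hax with rfl | rfl <;> rcases mul_eq_zero.1 hby with rfl | rfl <;>
        simp_all
    · rw [if_neg hxy]
      split_ifs <;> linarith
  · refine (Real.concaveOn_rpow h0 h1).congr fun x _ => ?_
    by_cases hx : x = 0
    · simp [fracTerm, hx, Real.zero_rpow hpos.ne']
    · simp [fracTerm, hx]

end fracTerm

section Hz

variable {α : ℝ}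

theorem Hz_eq_Hz_one (c α x : ℝ) : Hz c α x = Hz 1 α (x / c) := by
  simp [Hz]

theorem Hz_one (α y : ℝ) : Hz 1 α y = ⌊y⌋ + fracTerm α (Int.fract y) := by
  simp [Hz, fracTerm]

theorem Hz_one_add_intCast (α y : ℝ) (n : ℤ) : Hz 1 α (y + n) = Hz 1 α y + n := by
  rw [Hz_one, Hz_one, Int.floor_add_intCast, Int.fract_add_intCast]
  push_cast
  ring

theorem Hz_one_of_mem_Ico {a : ℝ} (ha : a ∈ Ico 0 1) : Hz 1 α a = fracTerm α a := by
  rw [Hz_one, Int.floor_eq_zero_iff.mpr ha, Int.fract_eq_self.mpr ha]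
  simp

theorem Hz_one_add_le_of_mem_Ico (h0 : 0 ≤ α) (h1 : α ≤ 1) {a b : ℝ} (ha : a ∈ Ico 0 1)
    (hb : b ∈ Ico 0 1) : Hz 1 α (a + b) ≤ fracTerm α a + fracTerm α b := by
  have hφ := concaveOn_fracTerm h0 h1
  rcases lt_or_ge (a + b) 1 with hcarry | hcarry
  · have key := hφ.add_le_add_of_add_eq (x := 0) (y := a + b) (b := b) self_mem_Ici
      (mem_Ici.mpr (by linarith [ha.1, hb.1])) ha.1 (by linarith [hb.1]) (by ring)
    rw [fracTerm_zero, zero_add] at key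
    rwa [Hz_one_of_mem_Ico ⟨by linarith [ha.1, hb.1], hcarry⟩]
  · have key := hφ.add_le_add_of_add_eq (x := a + b - 1) (y := 1) (b := b)
      (mem_Ici.mpr (by linarith)) (mem_Ici.mpr zero_le_one) (by linarith [hb.2]) ha.2.le (by ring)
    have hshift : Hz 1 α (a + b) = Hz 1 α (a + b - 1) + 1 := by
      simpa using Hz_one_add_intCast α (a + b - 1) 1
    rw [hshift, Hz_one_of_mem_Ico ⟨by linarith, by linarith [ha.2, hb.2]⟩]
    rwa [fracTerm_one] at key

theorem Hz_one_add_le (h0 : 0 ≤ α) (h1 : α ≤ 1) (u v : ℝ) :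
    Hz 1 α (u + v) ≤ Hz 1 α u + Hz 1 α v := by
  have huv : u + v = (Int.fract u + Int.fract v) + ((⌊u⌋ + ⌊v⌋ : ℤ) : ℝ) := by
    push_cast
    linarith [Int.floor_add_fract u, Int.floor_add_fract v]
  have hfract (w : ℝ) : Int.fract w ∈ Ico 0 1 := ⟨Int.fract_nonneg w, Int.fract_lt_one w⟩
  rw [huv, Hz_one_add_intCast, Hz_one α u, Hz_one α v]
  push_cast
  linarith [Hz_one_add_le_of_mem_Ico h0 h1 (hfract u) (hfract v)]

end Hz

theorem stmt4_general (α c x₁ x₂ : ℝ) (hα : α ∈ Set.Icc (0 : ℝ) 1) :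
    Hz c α (x₁ + x₂) ≤ Hz c α x₁ + Hz c α x₂ := by
  rw [Hz_eq_Hz_one, Hz_eq_Hz_one c α x₁, Hz_eq_Hz_one c α x₂, add_div]
  exact Hz_one_add_le hα.1 hα.2 _ _

theorem stmt4 (α c x₁ x₂ : ℝ) (hα : α ∈ Set.Icc (0 : ℝ) 1) (hc : 0 < c)
    (hx₁ : 0 ≤ x₁) (hx₂ : 0 ≤ x₂) :
    Hz c α (x₁ + x₂) ≤ Hz c α x₁ + Hz c α x₂ :=
  stmt4_general α c x₁ x₂ hα
end

section
/- For α ∈ [0,1], any real M with 1 ≤ M < 2, and any x with 0 ≤ x < 1 and 0 ≤ M − x < 1, one has 1 + (M − 1)^α ≤ x^α + (M − x)^α. -/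
/-! The map `t ↦ t ^ α` is concave on `[0, ∞)`, and `x, M - x` lie in `[M - 1, 1]` with the
same sum as the endpoints. Writing `x = p (M - 1) + q` and `M - x = q (M - 1) + p` with
`p + q = 1`, the two concavity inequalities add up to the claim. -/

theorem ConcaveOn.map_add_map_le_of_mem_Icc_of_add_eq {𝕜 : Type*} [Field 𝕜] [LinearOrder 𝕜]
    [IsStrictOrderedRing 𝕜] {s : Set 𝕜} {f : 𝕜 → 𝕜} (hf : ConcaveOn 𝕜 s f) {a b x y : 𝕜}
    (ha : a ∈ s) (hb : b ∈ s) (hx : x ∈ Set.Icc a b) (hxy : x + y = a + b) :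
    f a + f b ≤ f x + f y := by
  rw [← segment_eq_Icc (hx.1.trans hx.2)] at hx
  obtain ⟨p, q, hp, hq, hpq, rfl⟩ := hx
  have hy : y = q • a + p • b := by
    simp only [smul_eq_mul] at hxy ⊢
    linear_combination hxy - (a + b) * hpq
  have hfx := hf.2 ha hb hp hq hpq
  have hfy := hf.2 ha hb hq hp (by rw [add_comm, hpq])
  rw [← hy] at hfy
  simp only [smul_eq_mul] at hfx hfy ⊢
  linear_combination hfx + hfy - (f a + f b) * hpq

theorem stmt7_general (α M x : ℝ) (hα : α ∈ Set.Icc (0 : ℝ) 1)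
    (hx1 : x < 1) (hM1 : 1 ≤ M)
    (hMx1 : M - x < 1) :
    1 + (M - 1) ^ α ≤ x ^ α + (M - x) ^ α := by
  have h := (Real.concaveOn_rpow hα.1 hα.2).map_add_map_le_of_mem_Icc_of_add_eq
    (a := M - 1) (b := 1) (x := x) (y := M - x) (by simp only [Set.mem_Ici]; linarith)
    (by simp) ⟨by linarith, hx1.le⟩ (by ring)
  rwa [Real.one_rpow, add_comm] at h

theorem stmt7 (α M x : ℝ) (hα : α ∈ Set.Icc (0 : ℝ) 1)
    (hx0 : 0 ≤ x) (hx1 : x < 1) (hM1 : 1 ≤ M) (hM2 : M < 2)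
    (hMx0 : 0 ≤ M - x) (hMx1 : M - x < 1) :
    1 + (M - 1) ^ α ≤ x ^ α + (M - x) ^ α :=
  stmt7_general α M x hα hx1 hM1 hMx1
end

section
/- For 0 ≤ h ≤ 1, α ∈ [0,1], and all x ≥ 0: h^α(⌊x⌋ + (x − ⌊x⌋)^α) ≥ ⌊hx⌋ + (hx − ⌊hx⌋)^α. -/
/-!
Write `F y = ⌊y⌋ + {y}^α`. Adding `u ∈ [0, 1]` to `y` raises `F` by at most `u^α`: without a carry
this is subadditivity of `t ↦ t^α`, with a carry it is the concavity estimate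
`1 + (a + b - 1)^α ≤ a^α + b^α`. Splitting `h x = h {x} + ⌊x⌋ h` and adding `h` a total of `⌊x⌋`
times to `h {x} < 1` gives `F (h x) ≤ (h {x})^α + ⌊x⌋ h^α = h^α F x`.
-/

open Set

theorem ConcaveOn.map_add_map_le_of_le {s : Set ℝ} {f : ℝ → ℝ} (hf : ConcaveOn ℝ s f)
    {x y d : ℝ} (hx : x ∈ s) (hyd : y + d ∈ s) (hxy : x ≤ y) (hd : 0 ≤ d) :
    f (y + d) + f x ≤ f (x + d) + f y := by
  rcases (add_le_add hxy hd).eq_or_lt with hxd | hxd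
  · obtain rfl : y = x := by linarith
    obtain rfl : d = 0 := by linarith
    simp
  have hT : 0 < y + d - x := by linarith
  have ha : 0 ≤ (y - x) / (y + d - x) := div_nonneg (by linarith) hT.le
  have hb : 0 ≤ d / (y + d - x) := div_nonneg hd hT.le
  have hab : (y - x) / (y + d - x) + d / (y + d - x) = 1 := by field_simp; ring
  -- `x + d` and `y` are the convex combinations of `x` and `y + d` with swapped weights.
  have hinner₁ := hf.2 hx hyd ha hb hab
  have hinner₂ := hf.2 hx hyd hb ha (by linarith)
  have hx₁ : ((y - x) / (y + d - x)) • x + (d / (y + d - x)) • (y + d) = x + d := by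
    simp only [smul_eq_mul]; field_simp; ring
  have hx₂ : (d / (y + d - x)) • x + ((y - x) / (y + d - x)) • (y + d) = y := by
    simp only [smul_eq_mul]; field_simp; ring
  rw [hx₁] at hinner₁
  rw [hx₂] at hinner₂
  simp only [smul_eq_mul] at hinner₁ hinner₂
  linear_combination hinner₁ + hinner₂ - (f x + f (y + d)) * hab

theorem Real.one_add_rpow_le_rpow_add_rpow {α a b : ℝ} (hα₀ : 0 ≤ α) (hα₁ : α ≤ 1)
    (ha : a ≤ 1) (hb : b ≤ 1) (hab : 1 ≤ a + b) :
    1 + (a + b - 1) ^ α ≤ a ^ α + b ^ α := by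
  have key := (Real.concaveOn_rpow hα₀ hα₁).map_add_map_le_of_le (x := a + b - 1) (y := a)
    (d := 1 - a) (mem_Ici.2 (by linarith)) (mem_Ici.2 (by linarith)) (by linarith)
    (by linarith)
  rw [show a + (1 - a) = 1 by ring, show a + b - 1 + (1 - a) = b by ring, Real.one_rpow] at key
  linarith

noncomputable def floorAddFractRpow (α y : ℝ) : ℝ := ⌊y⌋ + Int.fract y ^ α

section floorAddFractRpow

variable {α : ℝ}

theorem floorAddFractRpow_of_mem_Ico {y : ℝ} (hy : y ∈ Ico 0 1) :
    floorAddFractRpow α y = y ^ α := by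
  rw [floorAddFractRpow, Int.floor_eq_zero_iff.2 hy, Int.fract_eq_self.2 hy]
  simp

theorem floorAddFractRpow_add_le (hα₀ : 0 ≤ α) (hα₁ : α ≤ 1) (s : ℝ) {u : ℝ} (hu₀ : 0 ≤ u)
    (hu₁ : u ≤ 1) : floorAddFractRpow α (s + u) ≤ floorAddFractRpow α s + u ^ α := by
  have hs := Int.floor_add_fract s
  have hfract₀ := Int.fract_nonneg s
  have hfract₁ := Int.fract_lt_one s
  unfold floorAddFractRpow
  rcases lt_or_ge (Int.fract s + u) 1 with hcarry | hcarry
  · have hfloor : ⌊s + u⌋ = ⌊s⌋ := by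
      rw [Int.floor_eq_iff]; constructor <;> linarith
    have hfract : Int.fract (s + u) = Int.fract s + u := by
      rw [← Int.self_sub_floor, hfloor]; linarith
    rw [hfloor, hfract]
    linarith [Real.rpow_add_le_add_rpow hfract₀ hu₀ hα₀ hα₁]
  · have hfloor : ⌊s + u⌋ = ⌊s⌋ + 1 := by
      rw [Int.floor_eq_iff]; push_cast; constructor <;> linarith
    have hfract : Int.fract (s + u) = Int.fract s + u - 1 := by
      rw [← Int.self_sub_floor, hfloor]; push_cast; linarith
    rw [hfloor, hfract]
    push_cast
    linarith [Real.one_add_rpow_le_rpow_add_rpow hα₀ hα₁ hfract₁.le hu₁ hcarry]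

theorem floorAddFractRpow_add_nsmul_le (hα₀ : 0 ≤ α) (hα₁ : α ≤ 1) (s : ℝ) {u : ℝ}
    (hu₀ : 0 ≤ u) (hu₁ : u ≤ 1) (n : ℕ) :
    floorAddFractRpow α (s + n * u) ≤ floorAddFractRpow α s + n * u ^ α := by
  induction n with
  | zero => simp
  | succ n ih =>
    calc floorAddFractRpow α (s + (n + 1 : ℕ) * u)
        = floorAddFractRpow α ((s + n * u) + u) := by push_cast; ring_nf
      _ ≤ floorAddFractRpow α (s + n * u) + u ^ α :=
        floorAddFractRpow_add_le hα₀ hα₁ _ hu₀ hu₁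
      _ ≤ floorAddFractRpow α s + (n + 1 : ℕ) * u ^ α := by push_cast; linarith

end floorAddFractRpow

theorem stmt10 (α h x : ℝ) (hα : α ∈ Set.Icc (0 : ℝ) 1)
    (hh : h ∈ Set.Icc (0 : ℝ) 1) (hx : 0 ≤ x) :
    (⌊h * x⌋ : ℝ) + (h * x - ⌊h * x⌋) ^ α ≤
      h ^ α * ((⌊x⌋ : ℝ) + (x - ⌊x⌋) ^ α) := by
  obtain ⟨hα₀, hα₁⟩ := hα
  obtain ⟨hh₀, hh₁⟩ := hh
  obtain ⟨n, hn⟩ := Int.eq_ofNat_of_zero_le (Int.floor_nonneg.2 hx)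
  have hfract₀ := Int.fract_nonneg x
  have hfract₁ := Int.fract_lt_one x
  have hsplit : h * x = h * Int.fract x + n * h := by
    rw [← Int.self_sub_floor, hn]; push_cast; ring
  have hsmall : h * Int.fract x ∈ Ico 0 1 :=
    ⟨by positivity, by nlinarith⟩
  have key := floorAddFractRpow_add_nsmul_le hα₀ hα₁ (h * Int.fract x) hh₀ hh₁ n
  rw [← hsplit, floorAddFractRpow_of_mem_Ico hsmall, Real.mul_rpow hh₀ hfract₀] at key
  rw [Int.self_sub_floor, Int.self_sub_floor, hn]
  push_cast
  unfold floorAddFractRpow at key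
  linarith
end

section
/- Fix m₁, m₂ > 0 and α ∈ [0,1]. With k_i(c) = c^α H_{c,α}(m_i) and k₃(c) = c^α H_{c,α}(m₁+m₂) as above, lim_{c→0⁺} k₁(c)/k₃(c) = m₁/(m₁+m₂) and lim_{c→0⁺} k₂(c)/k₃(c) = m₂/(m₁+m₂). -/
/-! `Hc c α x` differs from `x / c` by `f ^ α - f` with `f = Int.fract (x / c) ∈ [0, 1)`, hence
by at most `1`, so `c * Hc c α x` is within `c` of `x`. The factor `c ^ α` cancels in each ratio,
which is therefore the ratio of two quantities tending to `m` and `m₁ + m₂`. -/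

open Filter
open scoped Topology

noncomputable def Hc (c α x : ℝ) : ℝ :=
  (⌊x / c⌋ : ℝ) + (x / c - ⌊x / c⌋) ^ α

lemma Hc_eq_sub_fract_add_fract_rpow (c α x : ℝ) :
    Hc c α x = x / c - Int.fract (x / c) + Int.fract (x / c) ^ α := by
  rw [Hc, Int.fract]
  ring

lemma abs_Hc_sub_div_le_one {α : ℝ} (hα : 0 ≤ α) (c x : ℝ) : |Hc c α x - x / c| ≤ 1 := by
  have hf₀ := Int.fract_nonneg (x / c)
  have hf₁ := (Int.fract_lt_one (x / c)).le
  have hp₀ : 0 ≤ Int.fract (x / c) ^ α := Real.rpow_nonneg hf₀ α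
  have hp₁ : Int.fract (x / c) ^ α ≤ 1 := Real.rpow_le_one hf₀ hf₁ hα
  rw [abs_le, Hc_eq_sub_fract_add_fract_rpow]
  constructor <;> linarith

lemma abs_mul_Hc_sub_le {α c : ℝ} (hα : 0 ≤ α) (hc : 0 < c) (x : ℝ) :
    |c * Hc c α x - x| ≤ c :=
  calc |c * Hc c α x - x| = c * |Hc c α x - x / c| := by
        rw [← abs_of_pos hc, ← abs_mul, abs_of_pos hc, mul_sub, mul_div_cancel₀ x hc.ne']
    _ ≤ c * 1 := mul_le_mul_of_nonneg_left (abs_Hc_sub_div_le_one hα c x) hc.le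
    _ = c := mul_one c

lemma tendsto_mul_Hc {α : ℝ} (hα : 0 ≤ α) (x : ℝ) :
    Tendsto (fun c => c * Hc c α x) (𝓝[>] 0) (𝓝 x) := by
  rw [tendsto_iff_norm_sub_tendsto_zero]
  refine squeeze_zero' (Eventually.of_forall fun _ => norm_nonneg _) ?_ nhdsWithin_le_nhds
  filter_upwards [self_mem_nhdsWithin] with c hc using abs_mul_Hc_sub_le hα hc x

lemma tendsto_rpow_mul_Hc_div {α : ℝ} (hα : 0 ≤ α) (x y : ℝ) (hy : y ≠ 0) :
    Tendsto (fun c => (c ^ α * Hc c α x) / (c ^ α * Hc c α y)) (𝓝[>] 0) (𝓝 (x / y)) := by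
  refine ((tendsto_mul_Hc hα x).div (tendsto_mul_Hc hα y) hy).congr' ?_
  filter_upwards [self_mem_nhdsWithin] with c (hc : 0 < c)
  rw [Pi.div_apply, mul_div_mul_left _ _ hc.ne', mul_div_mul_left _ _ (Real.rpow_pos_of_pos hc α).ne']

theorem stmt18 (m₁ m₂ α : ℝ) (hm₁ : 0 < m₁) (hm₂ : 0 < m₂)
    (hα : α ∈ Set.Icc (0 : ℝ) 1) :
    Tendsto (fun c : ℝ => (c ^ α * Hc c α m₁) / (c ^ α * Hc c α (m₁ + m₂)))
        (𝓝[>] (0 : ℝ)) (𝓝 (m₁ / (m₁ + m₂))) ∧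
      Tendsto (fun c : ℝ => (c ^ α * Hc c α m₂) / (c ^ α * Hc c α (m₁ + m₂)))
        (𝓝[>] (0 : ℝ)) (𝓝 (m₂ / (m₁ + m₂))) := by
  have hm : m₁ + m₂ ≠ 0 := by positivity
  exact ⟨tendsto_rpow_mul_Hc_div hα.1 m₁ _ hm, tendsto_rpow_mul_Hc_div hα.1 m₂ _ hm⟩
end
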